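/- arXiv:2309.03848 — 3 statements merged into one kernel-verified Lean document; each statement's English description precedes it below -/
import Mathlib

section
/- Let ω : ℕ → ℝ be a function with ω(r) → ∞ as r → ∞, and for each r let p(r) = (log r − ω(r))/r, assuming p(r) ≥ 0. Let X be a random edge-subgraph of K_{r,r} drawn from G(K_{r,r}, p(r)). Then the probability that the friends-and-strangers graph FS(X, K_{r,r}) has more than two connected components tends to 1 as r → ∞. -/
open SimpleGraph

/-- The friends-and-strangers graph `FS X Y`. -/
def FS {V W : Type*} (X : SimpleGraph V) (Y : SimpleGraph W) : SimpleGraph (V ≃ W) :=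
  SimpleGraph.fromRel (fun σ τ => ∃ a b : V, X.Adj a b ∧ Y.Adj (σ a) (σ b) ∧
    σ a = τ b ∧ σ b = τ a ∧ ∀ c : V, c ≠ a → c ≠ b → σ c = τ c)


/-- The Bernoulli measure on `Bool` with success probability `p`. -/
noncomputable def bernoulliMeasure (p : ℝ) : MeasureTheory.Measure Bool :=
  ENNReal.ofReal p • MeasureTheory.Measure.dirac true +
    ENNReal.ofReal (1 - p) • MeasureTheory.Measure.dirac false

/-- The distribution `G(K_{r,r}, p)`: each of the `r * r` potential edges of the complete
bipartite graph is present independently with probability `p`; outcomes are indexed by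
functions recording the presence of each potential edge. -/
noncomputable def bipartiteRandomModel (r : ℕ) (p : ℝ) :
    MeasureTheory.Measure (Fin r × Fin r → Bool) :=
  MeasureTheory.Measure.pi fun _ => bernoulliMeasure p

/-- The edge-subgraph of `K_{r,r}` determined by an outcome `ω`. -/
def graphOf {r : ℕ} (ω : Fin r × Fin r → Bool) : SimpleGraph (Fin r ⊕ Fin r) :=
  SimpleGraph.fromRel (fun x y => ∃ i j, x = Sum.inl i ∧ y = Sum.inr j ∧ ω (i, j) = true)

/-! ### Graph-theoretic part -/

lemma iso_adj {r : ℕ} {ω : Fin r × Fin r → Bool} {i : Fin r} (h : ∀ j, ω (i, j) = false) :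
    ∀ y, ¬ (graphOf ω).Adj (Sum.inl i) y := by
  intro y hy
  rw [graphOf, fromRel_adj] at hy
  obtain ⟨-, h' | h'⟩ := hy <;> obtain ⟨i', j', h1, h2, h3⟩ := h'
  · obtain rfl : i = i' := by simpa using h1
    simp [h j'] at h3
  · simp at h2

lemma fs_adj_invariant {V W : Type*} {X : SimpleGraph V} {Y : SimpleGraph W} {v : V}
    (hv : ∀ y, ¬ X.Adj v y) {σ τ : V ≃ W} (h : (FS X Y).Adj σ τ) : σ v = τ v := by
  rw [FS, fromRel_adj] at h
  obtain ⟨-, h | h⟩ := h <;> obtain ⟨a, b, hab, -, -, -, hc⟩ := h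
  · exact hc v (fun e => hv b (e ▸ hab)) (fun e => hv a (e ▸ hab.symm))
  · exact (hc v (fun e => hv b (e ▸ hab)) (fun e => hv a (e ▸ hab.symm))).symm

lemma fs_reach_invariant {V W : Type*} {X : SimpleGraph V} {Y : SimpleGraph W} {v : V}
    (hv : ∀ y, ¬ X.Adj v y) {σ τ : V ≃ W} (h : (FS X Y).Reachable σ τ) : σ v = τ v := by
  obtain ⟨p⟩ := h
  induction p with
  | nil => rfl
  | cons hadj p ih => exact (fs_adj_invariant hv hadj).trans ih

lemma two_lt_card_FS {r : ℕ} (hr : 2 ≤ r) {ω : Fin r × Fin r → Bool} {i : Fin r}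
    (h : ∀ j, ω (i, j) = false) :
    2 < Nat.card (FS (graphOf ω)
      (completeBipartiteGraph (Fin r) (Fin r))).ConnectedComponent := by
  have hv := iso_adj h
  set G := FS (graphOf ω) (completeBipartiteGraph (Fin r) (Fin r)) with hG
  set v : Fin r ⊕ Fin r := Sum.inl i with hvdef
  let e : Fin 3 → ((Fin r ⊕ Fin r) ≃ (Fin r ⊕ Fin r)) :=
    ![Equiv.refl _, Equiv.swap v (Sum.inr ⟨0, by omega⟩), Equiv.swap v (Sum.inr ⟨1, by omega⟩)]
  have hval : ∀ k : Fin 3, (e k) v = ![v, Sum.inr ⟨0, by omega⟩, Sum.inr ⟨1, by omega⟩] k := by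
    intro k
    fin_cases k <;> simp [e, Equiv.swap_apply_left]
  have hinj : Function.Injective (fun k : Fin 3 => G.connectedComponentMk (e k)) := by
    intro x y hxy
    have := fs_reach_invariant hv ((SimpleGraph.ConnectedComponent.eq).mp hxy)
    rw [hval x, hval y] at this
    fin_cases x <;> fin_cases y <;> simp_all [Fin.ext_iff, hvdef]
  have := Nat.card_le_card_of_injective _ hinj
  simp at this ⊢; omega

/-! ### Measure-theoretic part -/

open MeasureTheory Finset

noncomputable def wt (q : ℝ) (x : Bool) : ℝ := if x then q else 1 - q

lemma wt_nonneg {q : ℝ} (h0 : 0 ≤ q) (h1 : q ≤ 1) (x : Bool) : 0 ≤ wt q x := by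
  cases x <;> simp [wt] <;> linarith

lemma bern_singleton (q : ℝ) (x : Bool) :
    bernoulliMeasure q {x} = ENNReal.ofReal (wt q x) := by
  cases x <;> simp [bernoulliMeasure, wt, Measure.dirac_apply]

instance bern_sf (q : ℝ) : MeasureTheory.SigmaFinite (bernoulliMeasure q) := by
  have : IsFiniteMeasure (bernoulliMeasure q) := by
    constructor
    have h : (bernoulliMeasure q) Set.univ = ENNReal.ofReal q + ENNReal.ofReal (1 - q) := by
      simp [bernoulliMeasure, Measure.dirac_apply]
    rw [h]
    exact ENNReal.add_lt_top.mpr ⟨ENNReal.ofReal_lt_top, ENNReal.ofReal_lt_top⟩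
  infer_instance

lemma pi_singleton {ι : Type*} [Fintype ι] {q : ℝ} (h0 : 0 ≤ q) (h1 : q ≤ 1)
    (f : ι → Bool) :
    (Measure.pi fun _ : ι => bernoulliMeasure q) {f}
      = ENNReal.ofReal (∏ k, wt q (f k)) := by
  have hs : {f} = Set.pi Set.univ (fun k => {f k}) := by
    ext g; simp [funext_iff, Set.mem_pi]
  rw [hs, Measure.pi_pi]
  rw [ENNReal.ofReal_prod_of_nonneg (fun k _ => wt_nonneg h0 h1 (f k))]
  simp [bern_singleton]

lemma pi_set {ι : Type*} [Fintype ι] {q : ℝ} (h0 : 0 ≤ q) (h1 : q ≤ 1)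
    (S : Set (ι → Bool)) :
    (Measure.pi fun _ : ι => bernoulliMeasure q) S
      = ENNReal.ofReal (∑ f ∈ (Set.toFinite S).toFinset, ∏ k, wt q (f k)) := by
  classical
  have hS : S = ⋃ f ∈ (Set.toFinite S).toFinset, {f} := by
    ext g
    constructor
    · intro hg; exact Set.mem_iUnion₂.mpr ⟨g, by simpa using hg, rfl⟩
    · intro hg; obtain ⟨f, hf, hgf⟩ := Set.mem_iUnion₂.mp hg
      rw [Set.mem_singleton_iff] at hgf; subst hgf; simpa using hf
  have hmeas := measure_biUnion_finset (μ := Measure.pi fun _ : ι => bernoulliMeasure q)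
      (s := (Set.toFinite S).toFinset) (f := fun f => ({f} : Set (ι → Bool)))
      (by intro x _ y _ hxy; simp [Function.onFun, Set.disjoint_singleton, hxy])
      (fun b _ => MeasurableSet.singleton b)
  rw [← hS] at hmeas
  rw [hmeas, ENNReal.ofReal_sum_of_nonneg
      (fun f _ => Finset.prod_nonneg fun k _ => wt_nonneg h0 h1 (f k))]
  exact Finset.sum_congr rfl fun f _ => pi_singleton h0 h1 f

lemma sum_all {ι : Type*} [Fintype ι] [DecidableEq ι] (q : ℝ) : ∑ f : ι → Bool, ∏ k, wt q (f k) = 1 := by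
  classical
  rw [← Fintype.piFinset_univ, ← Finset.prod_univ_sum]
  have h1 : wt q true + wt q false = 1 := by simp [wt]
  simp [h1]

lemma pi_univ_one {ι : Type*} [Fintype ι] {q : ℝ} (h0 : 0 ≤ q) (h1 : q ≤ 1) :
    (Measure.pi fun _ : ι => bernoulliMeasure q) Set.univ = 1 := by
  classical
  haveI := Classical.decEq ι
  rw [pi_set h0 h1]
  have hu : (Set.toFinite (Set.univ : Set (ι → Bool))).toFinset = Finset.univ := by
    ext f; simp
  rw [hu, sum_all]; simp

lemma key_sum {r : ℕ} {q : ℝ} :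
    ∑ f ∈ (Set.toFinite {ω : Fin r × Fin r → Bool | ∀ i, ∃ j, ω (i, j) = true}).toFinset,
      ∏ k : Fin r × Fin r, wt q (f k) = (1 - (1 - q) ^ r) ^ r := by
  classical
  set T : Finset (Fin r → Bool) := Finset.univ.filter (fun g => ∃ j, g j = true) with hT
  have htot : ∑ g : Fin r → Bool, ∏ j, wt q (g j) = 1 := by
    rw [← Fintype.piFinset_univ, ← Finset.prod_univ_sum]
    have h1 : wt q true + wt q false = 1 := by simp [wt]
    simp [h1]
  have hTerase : T = Finset.univ.erase (fun _ => false) := by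
    ext g
    simp only [hT, Finset.mem_filter, Finset.mem_univ, true_and, Finset.mem_erase, and_true]
    constructor
    · rintro ⟨j, hj⟩ he
      rw [funext_iff] at he
      simp [he j] at hj
    · intro hne
      by_contra hc
      push_neg at hc
      exact hne (funext fun j => by simpa using hc j)
  have hinner : ∑ g ∈ T, ∏ j, wt q (g j) = 1 - (1 - q) ^ r := by
    rw [hTerase, Finset.sum_erase_eq_sub (Finset.mem_univ _), htot]
    simp [wt]
  have hsplit : ∀ f : Fin r × Fin r → Bool,
      ∏ k : Fin r × Fin r, wt q (f k) = ∏ i, ∏ j, wt q (f (i, j)) :=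
    fun f => Fintype.prod_prod_type _
  have houter : ∑ f ∈ (Set.toFinite {ω : Fin r × Fin r → Bool | ∀ i, ∃ j, ω (i, j) = true}).toFinset,
      ∏ k : Fin r × Fin r, wt q (f k)
      = ∑ h ∈ Fintype.piFinset (fun _ : Fin r => T), ∏ i, ∏ j, wt q (h i j) := by
    simp only [hsplit]
    refine Finset.sum_nbij' (fun f => fun i j => f (i, j)) (fun h => fun p => h p.1 p.2)
      ?_ ?_ ?_ ?_ ?_
    · intro f hf
      simp only [Set.Finite.mem_toFinset, Set.mem_setOf_eq] at hf
      simp only [Fintype.mem_piFinset, hT, Finset.mem_filter, Finset.mem_univ, true_and]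
      exact hf
    · intro h hh
      simp only [Fintype.mem_piFinset, hT, Finset.mem_filter, Finset.mem_univ, true_and] at hh
      simp only [Set.Finite.mem_toFinset, Set.mem_setOf_eq]
      exact hh
    · intro f _; rfl
    · intro h _; rfl
    · intro f _; rfl
  rw [houter,
    Finset.sum_prod_piFinset (ι := Fin r) T (fun _ g => ∏ j, wt q (g j)), hinner]
  simp

/-! ### Analytic part -/

set_option maxHeartbeats 1000000 in
lemma analytic_bound {r : ℕ} {P W : ℝ} (hr : (5832 : ℕ) ≤ r)
    (hP : P = (Real.log r - W) / r) (hP0 : 0 ≤ P) (hW : 2 ≤ W) :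
    P ≤ 1 / 2 ∧ 0 ≤ (1 - (1 - P) ^ r) ^ r ∧
      (1 - (1 - P) ^ r) ^ r ≤ Real.exp (-Real.exp (W - 1)) := by
  have hR : (5832 : ℝ) ≤ (r : ℝ) := by exact_mod_cast Nat.cast_le.mpr hr
  have hR0 : (0 : ℝ) < (r : ℝ) := by linarith
  set R : ℝ := (r : ℝ) with hRdef
  set L : ℝ := Real.log R with hLdef
  have hRP : R * P = L - W := by rw [hP]; field_simp
  have hWL : W ≤ L := by nlinarith [mul_nonneg hR0.le hP0]
  set c : ℝ := R ^ ((1 : ℝ)/3) with hcdef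
  have hc0 : 0 < c := Real.rpow_pos_of_pos hR0 _
  have hcube : c ^ 3 = R := by
    rw [hcdef, ← Real.rpow_natCast (R ^ ((1:ℝ)/3)) 3, ← Real.rpow_mul hR0.le]
    norm_num
  have hc18 : 18 ≤ c := by nlinarith [hcube, sq_nonneg (c - 18), sq_nonneg (c + 18), hc0]
  have hL3 : L ≤ 3 * c := by
    have h := Real.log_le_sub_one_of_pos hc0
    rw [hcdef, Real.log_rpow hR0] at h
    have : (1:ℝ)/3 * L ≤ c - 1 := h
    linarith
  have hPc3 : P * c ^ 3 ≤ 3 * c := by rw [hcube]; nlinarith [hRP, hWL, hW, hL3]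
  have hPc2 : P * c ^ 2 ≤ 3 := by nlinarith [hc0, hPc3]
  have hPhalf : P ≤ 1 / 2 := by
    have h1 : 0 ≤ P * ((c - 18) * (c + 18)) :=
      mul_nonneg hP0 (mul_nonneg (by linarith) (by linarith))
    nlinarith [hPc2]
  have hPc1 : P * c ≤ 1 / 6 := by
    have h1 : 0 ≤ (P * c) * (c - 18) := mul_nonneg (mul_nonneg hP0 hc0.le) (by linarith)
    nlinarith [hPc2]
  have h2PL : 2 * P * L ≤ 1 := by
    have := mul_le_mul_of_nonneg_left hL3 hP0
    nlinarith [hPc1]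
  have h1P : 0 < 1 - P := by linarith
  have hlog : -(P + 2 * P ^ 2) ≤ Real.log (1 - P) := by
    have hinv : Real.log (1 - P)⁻¹ ≤ (1 - P)⁻¹ - 1 :=
      Real.log_le_sub_one_of_pos (by positivity)
    rw [Real.log_inv] at hinv
    have hle : (1 - P)⁻¹ ≤ 1 + P + 2 * P ^ 2 := by
      rw [inv_eq_one_div, div_le_iff₀ h1P]
      nlinarith [hP0, hPhalf]
    linarith
  have hRlog : W - 1 - L ≤ R * Real.log (1 - P) := by
    have h1 := mul_le_mul_of_nonneg_left hlog hR0.le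
    have h2 : R * (-(P + 2 * P ^ 2)) = -(L - W) - 2 * P * (L - W) := by
      linear_combination (-1 - 2 * P) * hRP
    have h3 : 2 * P * (L - W) ≤ 2 * P * L := mul_le_mul_of_nonneg_left (by linarith) (by linarith)
    linarith
  have hpow : (1 - P) ^ r = Real.exp ((r : ℝ) * Real.log (1 - P)) := by
    rw [Real.exp_nat_mul, Real.exp_log h1P]
  have hq : Real.exp (W - 1) / R ≤ (1 - P) ^ r := by
    rw [hpow]
    have h1 : Real.exp (W - 1 - L) ≤ Real.exp (R * Real.log (1 - P)) :=
      Real.exp_le_exp.mpr hRlog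
    have h2 : Real.exp (W - 1 - L) = Real.exp (W - 1) / R := by
      rw [Real.exp_sub, hLdef, Real.exp_log hR0]
    rw [← h2]; exact h1
  set Q : ℝ := (1 - P) ^ r with hQdef
  have hQ0 : 0 ≤ Q := pow_nonneg (by linarith) r
  have hQ1 : Q ≤ 1 := pow_le_one₀ (by linarith) (by linarith)
  refine ⟨hPhalf, pow_nonneg (by linarith) r, ?_⟩
  have hstep : 1 - Q ≤ Real.exp (-Q) := by linarith [Real.add_one_le_exp (-Q)]
  have h4 : (1 - Q) ^ r ≤ Real.exp (-Q) ^ r := pow_le_pow_left₀ (by linarith) hstep r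
  have h5 : Real.exp (-Q) ^ r = Real.exp ((r : ℝ) * (-Q)) := (Real.exp_nat_mul _ r).symm
  have h6 : Real.exp ((r : ℝ) * (-Q)) ≤ Real.exp (-Real.exp (W - 1)) := by
    apply Real.exp_le_exp.mpr
    have := (div_le_iff₀ hR0).mp hq
    nlinarith
  calc (1 - Q) ^ r ≤ Real.exp (-Q) ^ r := h4
    _ = Real.exp ((r : ℝ) * (-Q)) := h5
    _ ≤ Real.exp (-Real.exp (W - 1)) := h6

/-! ### Main theorem -/

theorem stmt5 (w : ℕ → ℝ) (hw : Filter.Tendsto w Filter.atTop Filter.atTop)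
    (p : ℕ → ℝ) (hp : ∀ r : ℕ, p r = (Real.log r - w r) / r)
    (hp0 : ∀ r : ℕ, 0 ≤ p r) :
    Filter.Tendsto
      (fun r : ℕ => bipartiteRandomModel r (p r)
        {ω | 2 < Nat.card (FS (graphOf ω)
          (completeBipartiteGraph (Fin r) (Fin r))).ConnectedComponent})
      Filter.atTop (nhds 1) := by
  have hev : ∀ᶠ r : ℕ in Filter.atTop, 2 ≤ w r ∧ 5832 ≤ r :=
    (hw.eventually_ge_atTop 2).and (Filter.eventually_ge_atTop 5832)
  -- real sequence tends to 0
  have hx0 : Filter.Tendsto (fun r : ℕ => (1 - (1 - p r) ^ r) ^ r) Filter.atTop (nhds 0) := by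
    have hup : Filter.Tendsto (fun r : ℕ => Real.exp (-Real.exp (w r - 1)))
        Filter.atTop (nhds 0) := by
      have h1 : Filter.Tendsto (fun r : ℕ => w r - 1) Filter.atTop Filter.atTop := by
        simpa [sub_eq_add_neg] using Filter.tendsto_atTop_add_const_right Filter.atTop (-1) hw
      have h2 : Filter.Tendsto (fun r : ℕ => Real.exp (w r - 1)) Filter.atTop Filter.atTop :=
        Real.tendsto_exp_atTop.comp h1
      have h3 : Filter.Tendsto (fun r : ℕ => -Real.exp (w r - 1)) Filter.atTop Filter.atBot :=
        Filter.tendsto_neg_atTop_atBot.comp h2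
      exact Real.tendsto_exp_atBot.comp h3
    refine tendsto_of_tendsto_of_tendsto_of_le_of_le' tendsto_const_nhds hup ?_ ?_
    · filter_upwards [hev] with r hr
      exact (analytic_bound hr.2 (hp r) (hp0 r) hr.1).2.1
    · filter_upwards [hev] with r hr
      exact (analytic_bound hr.2 (hp r) (hp0 r) hr.1).2.2
  have hofReal : Filter.Tendsto (fun r : ℕ => ENNReal.ofReal ((1 - (1 - p r) ^ r) ^ r))
      Filter.atTop (nhds 0) := by
    have := (ENNReal.continuous_ofReal.tendsto 0).comp hx0
    simpa [Function.comp_def] using this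
  have hlow : Filter.Tendsto (fun r : ℕ => 1 - ENNReal.ofReal ((1 - (1 - p r) ^ r) ^ r))
      Filter.atTop (nhds 1) := by
    have := ENNReal.Tendsto.sub (tendsto_const_nhds (x := (1 : ENNReal))) hofReal
      (Or.inl ENNReal.one_ne_top)
    simpa using this
  refine tendsto_of_tendsto_of_tendsto_of_le_of_le' hlow
    (tendsto_const_nhds (x := (1 : ENNReal))) ?_ ?_
  · filter_upwards [hev] with r hr
    obtain ⟨hw2, hr5832⟩ := hr
    obtain ⟨hPhalf, -, -⟩ := analytic_bound hr5832 (hp r) (hp0 r) hw2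
    have h0 : 0 ≤ p r := hp0 r
    have h1 : p r ≤ 1 := by linarith
    set A : Set (Fin r × Fin r → Bool) := {ω | ∃ i, ∀ j, ω (i, j) = false} with hA
    have hcompl : Aᶜ = {ω : Fin r × Fin r → Bool | ∀ i, ∃ j, ω (i, j) = true} := by
      ext ω
      simp only [hA, Set.mem_compl_iff, Set.mem_setOf_eq, not_exists, not_forall]
      constructor
      · intro h i
        obtain ⟨j, hj⟩ := h i
        exact ⟨j, by simpa using hj⟩
      · intro h i
        obtain ⟨j, hj⟩ := h i
        exact ⟨j, by simp [hj]⟩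
    have hμc : bipartiteRandomModel r (p r) Aᶜ
        = ENNReal.ofReal ((1 - (1 - p r) ^ r) ^ r) := by
      rw [hcompl, bipartiteRandomModel, pi_set h0 h1, key_sum]
    have hμu : bipartiteRandomModel r (p r) Set.univ = 1 := by
      rw [bipartiteRandomModel]; exact pi_univ_one h0 h1
    have hsub : A ⊆ {ω : Fin r × Fin r → Bool | 2 < Nat.card (FS (graphOf ω)
        (completeBipartiteGraph (Fin r) (Fin r))).ConnectedComponent} := by
      rintro ω ⟨i, hi⟩
      exact two_lt_card_FS (by omega) hi
    have h1le : 1 ≤ bipartiteRandomModel r (p r) A + bipartiteRandomModel r (p r) Aᶜ := by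
      rw [← hμu]
      calc bipartiteRandomModel r (p r) Set.univ
          = bipartiteRandomModel r (p r) (A ∪ Aᶜ) := by rw [Set.union_compl_self]
        _ ≤ _ := measure_union_le _ _
    calc 1 - ENNReal.ofReal ((1 - (1 - p r) ^ r) ^ r)
        = 1 - bipartiteRandomModel r (p r) Aᶜ := by rw [hμc]
      _ ≤ bipartiteRandomModel r (p r) A := tsub_le_iff_right.mpr h1le
      _ ≤ _ := measure_mono hsub
  · filter_upwards [hev] with r hr
    obtain ⟨hw2, hr5832⟩ := hr
    obtain ⟨hPhalf, -, -⟩ := analytic_bound hr5832 (hp r) (hp0 r) hw2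
    have hμu : bipartiteRandomModel r (p r) Set.univ = 1 := by
      rw [bipartiteRandomModel]; exact pi_univ_one (hp0 r) (by linarith)
    calc bipartiteRandomModel r (p r) _ ≤ bipartiteRandomModel r (p r) Set.univ :=
        measure_mono (Set.subset_univ _)
      _ = 1 := hμu
end

section
/- Let r ≥ 2 be an integer, and let X be an edge-subgraph of K_{r,r} that is disconnected. Then the friends-and-strangers graph FS(X, K_{r,r}) has more than two connected components. -/
open SimpleGraph

theorem stmt10 (r : ℕ) (hr : 2 ≤ r)
    (X : SimpleGraph (Fin r ⊕ Fin r))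
    (hX : X ≤ completeBipartiteGraph (Fin r) (Fin r))
    (hdisc : ¬ X.Connected) :
    2 < Nat.card (FS X (completeBipartiteGraph (Fin r) (Fin r))).ConnectedComponent := by
  classical
  set Y := completeBipartiteGraph (Fin r) (Fin r) with hY
  have hne : Nonempty (Fin r ⊕ Fin r) := ⟨Sum.inl ⟨0, by omega⟩⟩
  rw [SimpleGraph.connected_iff] at hdisc
  push_neg at hdisc
  obtain ⟨u, v, huv⟩ : ∃ u v, ¬ X.Reachable u v := by
    by_contra h
    push_neg at h
    exact (hdisc (fun a b => h a b)).false hne.some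
  set S : Set (Fin r ⊕ Fin r) := {w | X.Reachable u w} with hSdef
  have huS : u ∈ S := SimpleGraph.Reachable.refl u
  have hvS : v ∉ S := huv
  have hclosed : ∀ {a b}, X.Adj a b → (a ∈ S ↔ b ∈ S) := by
    intro a b hab
    exact ⟨fun h => h.trans hab.reachable, fun h => h.trans hab.symm.reachable⟩
  have hsub : ∀ (σ τ : (Fin r ⊕ Fin r) ≃ (Fin r ⊕ Fin r)) (a b : Fin r ⊕ Fin r),
      X.Adj a b → σ a = τ b → σ b = τ a →
      (∀ c, c ≠ a → c ≠ b → σ c = τ c) → ⇑σ '' S ⊆ ⇑τ '' S := by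
    intro σ τ a b hab h1 h2 h3
    rintro _ ⟨x, hx, rfl⟩
    by_cases hxa : x = a
    · subst hxa
      exact ⟨b, (hclosed hab).mp hx, h1.symm⟩
    by_cases hxb : x = b
    · subst hxb
      exact ⟨a, (hclosed hab).mpr hx, h2.symm⟩
    · exact ⟨x, hx, (h3 x hxa hxb).symm⟩
  have hinv : ∀ σ τ, (FS X Y).Adj σ τ → ⇑σ '' S = ⇑τ '' S := by
    intro σ τ h
    rw [FS, SimpleGraph.fromRel_adj] at h
    obtain ⟨-, h | h⟩ := h
    · obtain ⟨a, b, hab, -, h1, h2, h3⟩ := h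
      exact Set.Subset.antisymm (hsub σ τ a b hab h1 h2 h3)
        (hsub τ σ b a hab.symm h1.symm h2.symm (fun c hb ha => (h3 c ha hb).symm))
    · obtain ⟨a, b, hab, -, h1, h2, h3⟩ := h
      exact Set.Subset.antisymm
        (hsub σ τ b a hab.symm h1.symm h2.symm (fun c hb ha => (h3 c ha hb).symm))
        (hsub τ σ a b hab h1 h2 h3)
  have keyW : ∀ (σ τ : (Fin r ⊕ Fin r) ≃ (Fin r ⊕ Fin r)) (p : (FS X Y).Walk σ τ),
      ⇑σ '' S = ⇑τ '' S := by
    intro σ τ p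
    induction p with
    | nil => rfl
    | cons ha p ih => exact (hinv _ _ ha).trans ih
  have key : ∀ σ τ, (FS X Y).Reachable σ τ → ⇑σ '' S = ⇑τ '' S := fun σ τ h =>
    h.elim (fun p => keyW σ τ p)
  -- find a third vertex
  obtain ⟨w3, hw3u, hw3v⟩ : ∃ w3 : Fin r ⊕ Fin r, w3 ≠ u ∧ w3 ≠ v := by
    have hcard : 4 ≤ Fintype.card (Fin r ⊕ Fin r) := by
      simp only [Fintype.card_sum, Fintype.card_fin]; omega
    have : (({u, v} : Finset (Fin r ⊕ Fin r))ᶜ).Nonempty := by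
      rw [← Finset.card_pos, Finset.card_compl]
      have h2 : ({u, v} : Finset (Fin r ⊕ Fin r)).card ≤ 2 :=
        (Finset.card_insert_le _ _).trans (by simp)
      omega
    obtain ⟨w3, hw3⟩ := this
    simp only [Finset.mem_compl, Finset.mem_insert, Finset.mem_singleton, not_or] at hw3
    exact ⟨w3, hw3.1, hw3.2⟩
  have mem_swap : ∀ (a b y : Fin r ⊕ Fin r),
      y ∈ ⇑(Equiv.swap a b) '' S ↔ Equiv.swap a b y ∈ S := by
    intro a b y
    rw [Equiv.image_eq_preimage_symm]
    simp
  -- main counting step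
  have main : ∀ (e1 e2 e3 : (Fin r ⊕ Fin r) ≃ (Fin r ⊕ Fin r)),
      ⇑e1 '' S ≠ ⇑e2 '' S → ⇑e1 '' S ≠ ⇑e3 '' S → ⇑e2 '' S ≠ ⇑e3 '' S →
      2 < Nat.card (FS X Y).ConnectedComponent := by
    intro e1 e2 e3 h12 h13 h23
    set c1 := (FS X Y).connectedComponentMk e1
    set c2 := (FS X Y).connectedComponentMk e2
    set c3 := (FS X Y).connectedComponentMk e3
    have hc12 : c1 ≠ c2 := fun h => h12 (key _ _ ((SimpleGraph.ConnectedComponent.eq).mp h))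
    have hc13 : c1 ≠ c3 := fun h => h13 (key _ _ ((SimpleGraph.ConnectedComponent.eq).mp h))
    have hc23 : c2 ≠ c3 := fun h => h23 (key _ _ ((SimpleGraph.ConnectedComponent.eq).mp h))
    have h3 : ({c1, c2, c3} : Set ((FS X Y).ConnectedComponent)).ncard = 3 :=
      Set.ncard_eq_three.mpr ⟨c1, c2, c3, hc12, hc13, hc23, rfl⟩
    calc 2 < 3 := by norm_num
      _ = ({c1, c2, c3} : Set ((FS X Y).ConnectedComponent)).ncard := h3.symm
      _ ≤ (Set.univ : Set ((FS X Y).ConnectedComponent)).ncard :=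
          Set.ncard_le_ncard (Set.subset_univ _) Set.finite_univ
      _ = Nat.card ((FS X Y).ConnectedComponent) := Set.ncard_univ _
  have hrefl : ⇑(Equiv.refl (Fin r ⊕ Fin r)) '' S = S := by simp
  by_cases hw3S : w3 ∈ S
  · refine main (Equiv.refl _) (Equiv.swap u v) (Equiv.swap w3 v) ?_ ?_ ?_
    · rw [hrefl]
      intro h
      apply hvS
      rw [h, mem_swap]
      simpa using huS
    · rw [hrefl]
      intro h
      apply hvS
      rw [h, mem_swap]
      simpa using hw3S
    · intro h
      have hIn : w3 ∈ ⇑(Equiv.swap u v) '' S := by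
        rw [mem_swap, Equiv.swap_apply_of_ne_of_ne hw3u hw3v]
        exact hw3S
      rw [h, mem_swap] at hIn
      simp only [Equiv.swap_apply_left] at hIn
      exact hvS hIn
  · refine main (Equiv.refl _) (Equiv.swap u v) (Equiv.swap u w3) ?_ ?_ ?_
    · rw [hrefl]
      intro h
      apply hvS
      rw [h, mem_swap]
      simpa using huS
    · rw [hrefl]
      intro h
      apply hw3S
      rw [h, mem_swap]
      simpa using huS
    · intro h
      have hIn : w3 ∈ ⇑(Equiv.swap u w3) '' S := by
        rw [mem_swap]
        simpa using huS
      rw [← h, mem_swap, Equiv.swap_apply_of_ne_of_ne hw3u hw3v] at hIn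
      exact hw3S hIn
end

section
/- Let ω : ℕ → ℝ be a function with ω(r) → ∞ as r → ∞, and for each r let p(r) = (log r − ω(r))/r, assuming p(r) ≥ 0. Let X be a random edge-subgraph of K_{r,r} drawn from G(K_{r,r}, p(r)). Then the probability that X is disconnected tends to 1 as r → ∞. -/
open SimpleGraph

/-!
A left vertex without edges disconnects the graph. The rows of the edge array are independent,
so every left vertex has an edge with probability
`(1 - (1 - p) ^ r) ^ r ≤ exp (-(r * (1 - p) ^ r))`,
and `r * (1 - p) ^ r ≥ exp (w - 2 r p²) → ∞` because `1 - p ≥ exp (-p - 2 p²)` for `p ≤ 1/2`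
and `r p = log r - w`.
-/

open MeasureTheory Filter Topology

lemma bernoulliMeasure_singleton_false (p : ℝ) :
    bernoulliMeasure p {false} = ENNReal.ofReal (1 - p) := by
  simp [bernoulliMeasure]

lemma isProbabilityMeasure_bernoulliMeasure {p : ℝ} (h0 : 0 ≤ p) (h1 : p ≤ 1) :
    IsProbabilityMeasure (bernoulliMeasure p) := by
  constructor
  simp [bernoulliMeasure, ← ENNReal.ofReal_add h0 (sub_nonneg.2 h1)]

lemma isProbabilityMeasure_bipartiteRandomModel (r : ℕ) {p : ℝ} (h0 : 0 ≤ p) (h1 : p ≤ 1) :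
    IsProbabilityMeasure (bipartiteRandomModel r p) :=
  have := isProbabilityMeasure_bernoulliMeasure h0 h1
  inferInstanceAs (IsProbabilityMeasure (Measure.pi _))

lemma MeasureTheory.Measure.pi_map_curry {ι κ X : Type*} [Fintype ι] [Fintype κ]
    [MeasurableSpace X] (μ : Measure X) [IsProbabilityMeasure μ] :
    (Measure.pi fun _ : ι × κ => μ).map (MeasurableEquiv.curry ι κ X) =
      Measure.pi fun _ : ι => Measure.pi fun _ : κ => μ := by
  simpa only [Measure.infinitePi_eq_pi] using
    Measure.infinitePi_map_curry (ι := ι) (κ := κ) fun _ _ => μ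

lemma MeasureTheory.Measure.pi_forall_curry_mem {ι κ X : Type*} [Fintype ι] [Fintype κ]
    [MeasurableSpace X] (μ : Measure X) [IsProbabilityMeasure μ] (T : Set (κ → X)) :
    Measure.pi (fun _ : ι × κ => μ) {ω | ∀ i, Function.curry ω i ∈ T} =
      Measure.pi (fun _ : κ => μ) T ^ Fintype.card ι := by
  have hpre : {ω : ι × κ → X | ∀ i, Function.curry ω i ∈ T} =
      MeasurableEquiv.curry ι κ X ⁻¹' Set.univ.pi fun _ => T := by
    ext ω; simp [MeasurableEquiv.coe_curry]
  rw [hpre, ← MeasurableEquiv.map_apply, Measure.pi_map_curry, Measure.pi_pi,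
    Finset.prod_const, Finset.card_univ]

lemma pi_bernoulliMeasure_exists_true {κ : Type*} [Fintype κ] {p : ℝ} (h0 : 0 ≤ p)
    (h1 : p ≤ 1) :
    Measure.pi (fun _ : κ => bernoulliMeasure p) {g | ∃ j, g j = true} =
      ENNReal.ofReal (1 - (1 - p) ^ Fintype.card κ) := by
  have := isProbabilityMeasure_bernoulliMeasure h0 h1
  have hcompl : {g : κ → Bool | ∃ j, g j = true} = (Set.univ.pi fun _ => {false})ᶜ := by
    ext g; simp
  rw [hcompl, prob_compl_eq_one_sub (.univ_pi fun _ => measurableSet_singleton false),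
    Measure.pi_pi, Finset.prod_const, Finset.card_univ, bernoulliMeasure_singleton_false,
    ← ENNReal.ofReal_pow (sub_nonneg.2 h1), ← ENNReal.ofReal_one,
    ← ENNReal.ofReal_sub _ (pow_nonneg (sub_nonneg.2 h1) _)]

lemma bipartiteRandomModel_forall_exists_edge (r : ℕ) {p : ℝ} (h0 : 0 ≤ p) (h1 : p ≤ 1) :
    bipartiteRandomModel r p {ω | ∀ i, ∃ j, ω (i, j) = true} =
      ENNReal.ofReal ((1 - (1 - p) ^ r) ^ r) := by
  have := isProbabilityMeasure_bernoulliMeasure h0 h1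
  have hpow : (1 - p) ^ r ≤ 1 := pow_le_one₀ (sub_nonneg.2 h1) (by linarith)
  rw [bipartiteRandomModel, ENNReal.ofReal_pow (sub_nonneg.2 hpow)]
  simpa [Function.curry, pi_bernoulliMeasure_exists_true h0 h1] using
    Measure.pi_forall_curry_mem (ι := Fin r) (bernoulliMeasure p)
      {g : Fin r → Bool | ∃ j, g j = true}

lemma exists_edge_of_connected_graphOf {r : ℕ} {ω : Fin r × Fin r → Bool}
    (h : (graphOf ω).Connected) (i : Fin r) : ∃ j, ω (i, j) = true := by
  have : Nontrivial (Fin r ⊕ Fin r) := ⟨⟨.inl i, .inr i, Sum.inl_ne_inr⟩⟩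
  obtain ⟨v, hv⟩ := h.preconnected.exists_adj_of_nontrivial (.inl i)
  simp only [graphOf, fromRel_adj] at hv
  obtain ⟨-, ⟨i', j, hi, -, hω⟩ | ⟨_, _, _, hi, _⟩⟩ := hv
  · exact ⟨j, Sum.inl_injective hi ▸ hω⟩
  · exact absurd hi Sum.inl_ne_inr

lemma bipartiteRandomModel_connected_le (r : ℕ) {p : ℝ} (h0 : 0 ≤ p) (h1 : p ≤ 1) :
    bipartiteRandomModel r p {ω | (graphOf ω).Connected} ≤
      ENNReal.ofReal ((1 - (1 - p) ^ r) ^ r) :=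
  bipartiteRandomModel_forall_exists_edge r h0 h1 ▸
    measure_mono fun _ h => exists_edge_of_connected_graphOf h

lemma tendsto_one_sub_pow_atTop_nhds_zero {q : ℕ → ℝ} (hq : ∀ᶠ n in atTop, q n ≤ 1)
    (h : Tendsto (fun n => n * q n) atTop atTop) :
    Tendsto (fun n => (1 - q n) ^ n) atTop (𝓝 0) := by
  refine tendsto_of_tendsto_of_tendsto_of_le_of_le' tendsto_const_nhds
    (Real.tendsto_exp_atBot.comp (tendsto_neg_atTop_atBot.comp h)) ?_ ?_
  · filter_upwards [hq] with n hn using pow_nonneg (sub_nonneg.2 hn) n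
  · filter_upwards [hq] with n hn
    calc (1 - q n) ^ n ≤ Real.exp (-q n) ^ n :=
          pow_le_pow_left₀ (sub_nonneg.2 hn) (Real.one_sub_le_exp_neg _) n
      _ = Real.exp (-(n * q n)) := by rw [← Real.exp_nat_mul, mul_neg]

lemma Real.exp_neg_div_one_sub_le {x : ℝ} (hx : x < 1) : Real.exp (-(x / (1 - x))) ≤ 1 - x := by
  have h := Real.one_sub_inv_le_log_of_pos (sub_pos.2 hx)
  rw [Real.le_log_iff_exp_le (sub_pos.2 hx)] at h
  convert h using 2
  field_simp [(sub_pos.2 hx).ne']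
  ring

lemma Real.exp_neg_sub_two_mul_sq_le_one_sub {x : ℝ} (hx : x ≤ 1 / 2) :
    Real.exp (-x - 2 * x ^ 2) ≤ 1 - x := by
  have h : x / (1 - x) ≤ x + 2 * x ^ 2 := by
    rw [div_le_iff₀ (by linarith)]
    nlinarith [mul_nonneg (sq_nonneg x) (by linarith : 0 ≤ 1 - 2 * x)]
  exact le_trans (Real.exp_le_exp.2 (by linarith)) (Real.exp_neg_div_one_sub_le (by linarith))

lemma tendsto_log_pow_div_natCast (k : ℕ) :
    Tendsto (fun r : ℕ => Real.log r ^ k / r) atTop (𝓝 0) := by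
  simpa [Function.comp_def] using (Real.tendsto_pow_log_div_mul_add_atTop 1 0 k one_ne_zero).comp
    tendsto_natCast_atTop_atTop

section Threshold

/- With `w → ∞`, `p r = (log r - w r) / r` lies just below the connectivity threshold
`log r / r`. -/

variable {w p : ℕ → ℝ}

lemma eventually_le_log_div_natCast (hw : Tendsto w atTop atTop)
    (hp : ∀ r : ℕ, p r = (Real.log r - w r) / r) :
    ∀ᶠ r : ℕ in atTop, p r ≤ Real.log r / r := by
  filter_upwards [hw.eventually_ge_atTop 0] with r hr
  rw [hp]
  gcongr
  linarith

lemma tendsto_nhds_zero_of_threshold (hw : Tendsto w atTop atTop)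
    (hp : ∀ r : ℕ, p r = (Real.log r - w r) / r) (hp0 : ∀ r : ℕ, 0 ≤ p r) :
    Tendsto p atTop (𝓝 0) :=
  tendsto_of_tendsto_of_tendsto_of_le_of_le' tendsto_const_nhds
    (by simpa using tendsto_log_pow_div_natCast 1) (.of_forall hp0)
    (eventually_le_log_div_natCast hw hp)

lemma tendsto_mul_sq_of_threshold (hw : Tendsto w atTop atTop)
    (hp : ∀ r : ℕ, p r = (Real.log r - w r) / r) (hp0 : ∀ r : ℕ, 0 ≤ p r) :
    Tendsto (fun r : ℕ => r * p r ^ 2) atTop (𝓝 0) := by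
  refine tendsto_of_tendsto_of_tendsto_of_le_of_le' tendsto_const_nhds
    (tendsto_log_pow_div_natCast 2) (.of_forall fun r => by positivity) ?_
  filter_upwards [eventually_le_log_div_natCast hw hp] with r hr
  calc (r : ℝ) * p r ^ 2 ≤ r * (Real.log r / r) ^ 2 := by gcongr; exact hp0 r
    _ = Real.log r ^ 2 / r := by rcases eq_or_ne (r : ℝ) 0 with h | h <;> field_simp [h]

lemma tendsto_mul_one_sub_pow_of_threshold (hw : Tendsto w atTop atTop)
    (hp : ∀ r : ℕ, p r = (Real.log r - w r) / r) (hp0 : ∀ r : ℕ, 0 ≤ p r) :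
    Tendsto (fun r : ℕ => r * (1 - p r) ^ r) atTop atTop := by
  have hlower : Tendsto (fun r : ℕ => Real.exp (w r - 2 * (r * p r ^ 2))) atTop atTop :=
    Real.tendsto_exp_atTop.comp <| by
      simpa [sub_eq_add_neg] using
        hw.atTop_add ((tendsto_mul_sq_of_threshold hw hp hp0).const_mul (-2))
  refine tendsto_atTop_mono' _ ?_ hlower
  filter_upwards [eventually_ge_atTop 1, (tendsto_nhds_zero_of_threshold hw hp hp0).eventually
    (eventually_le_nhds one_half_pos)] with r hr hp_half
  have hr0 : (0 : ℝ) < r := by exact_mod_cast hr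
  have hrp : r * p r = Real.log r - w r := by rw [hp]; field_simp
  calc Real.exp (w r - 2 * (r * p r ^ 2))
      = r * Real.exp (-p r - 2 * p r ^ 2) ^ r := by
        rw [← Real.exp_nat_mul, ← Real.exp_log hr0, ← Real.exp_add, Real.exp_log hr0]
        congr 1
        linear_combination hrp
    _ ≤ r * (1 - p r) ^ r := by
        gcongr
        exact Real.exp_neg_sub_two_mul_sq_le_one_sub hp_half

end Threshold

theorem stmt11 (w : ℕ → ℝ) (hw : Filter.Tendsto w Filter.atTop Filter.atTop)
    (p : ℕ → ℝ) (hp : ∀ r : ℕ, p r = (Real.log r - w r) / r)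
    (hp0 : ∀ r : ℕ, 0 ≤ p r) :
    Filter.Tendsto
      (fun r : ℕ => bipartiteRandomModel r (p r) {ω | ¬ (graphOf ω).Connected})
      Filter.atTop (nhds 1) := by
  have hp1 : ∀ᶠ r in atTop, p r ≤ 1 :=
    (tendsto_nhds_zero_of_threshold hw hp hp0).eventually (eventually_le_nhds one_pos)
  have hrows : Tendsto (fun r : ℕ => (1 - (1 - p r) ^ r) ^ r) atTop (𝓝 0) := by
    refine tendsto_one_sub_pow_atTop_nhds_zero ?_ (tendsto_mul_one_sub_pow_of_threshold hw hp hp0)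
    filter_upwards [hp1] with r hr using pow_le_one₀ (sub_nonneg.2 hr) (by linarith [hp0 r])
  have hconn : Tendsto (fun r => bipartiteRandomModel r (p r) {ω | (graphOf ω).Connected})
      atTop (𝓝 0) := by
    refine tendsto_of_tendsto_of_tendsto_of_le_of_le' tendsto_const_nhds
      (by simpa using ENNReal.tendsto_ofReal hrows) (.of_forall fun _ => zero_le) ?_
    filter_upwards [hp1] with r hr using bipartiteRandomModel_connected_le r (hp0 r) hr
  have hcompl : ∀ᶠ r in atTop, bipartiteRandomModel r (p r) {ω | ¬ (graphOf ω).Connected} =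
      1 - bipartiteRandomModel r (p r) {ω | (graphOf ω).Connected} := by
    filter_upwards [hp1] with r hr
    have := isProbabilityMeasure_bipartiteRandomModel r (hp0 r) hr
    exact prob_compl_eq_one_sub (Set.toFinite _).measurableSet
  rw [tendsto_congr' hcompl]
  simpa using ENNReal.Tendsto.sub tendsto_const_nhds hconn (.inl ENNReal.one_ne_top)
end
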